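/- Let H be a complex Hilbert space, p, ℓ ∈ ℕ, ν : Fin p → ℂ with Re ν_i < 0 for all i, and Ω : Fin ℓ → ℝ. Let g : ((Fin p → ℕ) × (Fin ℓ → ℤ)) → H, indexed by pairs (k, m) of multi-indices, be a pairwise orthogonal family with ∑_{(k,m)} ‖g_{k,m}‖² < ∞. Set Λ(k, m) := (∑_i k_i ν_i) + i (∑_j m_j Ω_j). Then: (i) for every t ≥ 0 the series u(t) := ∑_{(k,m)} e^{Λ(k,m) t} g_{k,m} converges in H; (ii) for every s ∈ ℂ with Re s > 0 the function t ↦ e^{-s t} u(t) is Bochner integrable on [0,∞), the series ∑_{(k,m)} (s − Λ(k,m))^{-1} g_{k,m} converges in H, and ∫_0^∞ e^{-s t} u(t) dt = ∑_{(k,m)} (s − Λ(k,m))^{-1} g_{k,m}. (This is the spectral expansion of the Koopman resolvent for dynamics converging to a stable quasi-periodic torus with basic frequencies Ω_1,…,Ω_ℓ and quasi-characteristic exponents ν_1,…,ν_p.) -/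

import Mathlib

/-!
Pythagoras makes an orthogonal series `∑ a q • g q` with `‖a q‖ ≤ C` converge, with every partial
sum of norm at most `C * √(∑ ‖g q‖²)`. As `Re Λ ≤ 0`, the partial sums of `e^{-st} u(t)` are thus
dominated by `√(∑ ‖g q‖²) e^{-Re s t}`, and dominated convergence along the net of finite partial
sums integrates term by term, with `∫₀^∞ e^{(Λ - s) t} dt = (s - Λ)⁻¹`. The resolvent series need
not converge absolutely, so term-by-term integration via `integral_tsum` is not available.
-/

open MeasureTheory Set Filter
open scoped InnerProductSpace Topology

theorem norm_smul_sq_le {𝕜 E ι : Type*} [NormedField 𝕜] [SeminormedAddCommGroup E]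
    [NormedSpace 𝕜 E] {g : ι → E} {a : ι → 𝕜} {C : ℝ} (ha : ∀ i, ‖a i‖ ≤ C) (i : ι) :
    ‖a i • g i‖ ^ 2 ≤ C ^ 2 * ‖g i‖ ^ 2 := by
  rw [norm_smul, mul_pow]
  gcongr
  exact ha i

section OrthogonalSeries

variable {𝕜 E ι : Type*} [RCLike 𝕜] [NormedAddCommGroup E] [InnerProductSpace 𝕜 E]

theorem orthogonalFamily_span_singleton {v : ι → E}
    (hv : Pairwise fun i j => ⟪v i, v j⟫_𝕜 = 0) :
    OrthogonalFamily 𝕜 (fun i => 𝕜 ∙ v i) fun i => (𝕜 ∙ v i).subtypeₗᵢ :=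
  orthogonalFamily_iff_pairwise.2 fun _ _ hij =>
    Submodule.isOrtho_span.2 fun _ hx _ hy => by
      rw [Set.mem_singleton_iff.1 hx, Set.mem_singleton_iff.1 hy]
      exact hv hij

theorem norm_sum_sq_of_pairwise_inner_eq_zero {v : ι → E}
    (hv : Pairwise fun i j => ⟪v i, v j⟫_𝕜 = 0) (s : Finset ι) :
    ‖∑ i ∈ s, v i‖ ^ 2 = ∑ i ∈ s, ‖v i‖ ^ 2 :=
  (orthogonalFamily_span_singleton hv).norm_sum
    (fun i => ⟨v i, Submodule.mem_span_singleton_self _⟩) s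

theorem summable_iff_summable_norm_sq_of_pairwise_inner_eq_zero [CompleteSpace E]
    {v : ι → E} (hv : Pairwise fun i j => ⟪v i, v j⟫_𝕜 = 0) :
    Summable v ↔ Summable fun i => ‖v i‖ ^ 2 :=
  (orthogonalFamily_span_singleton hv).summable_iff_norm_sq_summable
    (fun i => ⟨v i, Submodule.mem_span_singleton_self _⟩)

variable {g : ι → E} {a : ι → 𝕜} {C : ℝ}

theorem Pairwise.inner_smul_eq_zero (hg : Pairwise fun i j => ⟪g i, g j⟫_𝕜 = 0)
    (a : ι → 𝕜) : Pairwise fun i j => ⟪a i • g i, a j • g j⟫_𝕜 = 0 := fun i j hij => by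
  dsimp only
  rw [inner_smul_left, inner_smul_right, hg hij, mul_zero, mul_zero]

theorem summable_smul_of_pairwise_inner_eq_zero [CompleteSpace E]
    (hg : Pairwise fun i j => ⟪g i, g j⟫_𝕜 = 0) (hsum : Summable fun i => ‖g i‖ ^ 2)
    (ha : ∀ i, ‖a i‖ ≤ C) : Summable fun i => a i • g i :=
  (summable_iff_summable_norm_sq_of_pairwise_inner_eq_zero (hg.inner_smul_eq_zero a)).2 <|
    (hsum.mul_left (C ^ 2)).of_nonneg_of_le (fun _ => sq_nonneg _) (norm_smul_sq_le ha)

theorem norm_sum_smul_le_of_pairwise_inner_eq_zero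
    (hg : Pairwise fun i j => ⟪g i, g j⟫_𝕜 = 0) (hsum : Summable fun i => ‖g i‖ ^ 2)
    (hC : 0 ≤ C) (ha : ∀ i, ‖a i‖ ≤ C) (s : Finset ι) :
    ‖∑ i ∈ s, a i • g i‖ ≤ C * √(∑' i, ‖g i‖ ^ 2) := by
  rw [← Real.sqrt_sq hC, ← Real.sqrt_mul (sq_nonneg C),
    Real.le_sqrt (norm_nonneg _) (by positivity),
    norm_sum_sq_of_pairwise_inner_eq_zero (hg.inner_smul_eq_zero a)]
  calc ∑ i ∈ s, ‖a i • g i‖ ^ 2 ≤ ∑ i ∈ s, C ^ 2 * ‖g i‖ ^ 2 :=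
        Finset.sum_le_sum fun i _ => norm_smul_sq_le ha i
    _ ≤ C ^ 2 * ∑' i, ‖g i‖ ^ 2 := by
        rw [← Finset.mul_sum]
        gcongr
        exact hsum.sum_le_tsum s fun i _ => sq_nonneg _

theorem norm_tsum_smul_le_of_pairwise_inner_eq_zero [CompleteSpace E]
    (hg : Pairwise fun i j => ⟪g i, g j⟫_𝕜 = 0) (hsum : Summable fun i => ‖g i‖ ^ 2)
    (hC : 0 ≤ C) (ha : ∀ i, ‖a i‖ ≤ C) :
    ‖∑' i, a i • g i‖ ≤ C * √(∑' i, ‖g i‖ ^ 2) :=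
  le_of_tendsto' (summable_smul_of_pairwise_inner_eq_zero hg hsum ha).hasSum.norm
    (norm_sum_smul_le_of_pairwise_inner_eq_zero hg hsum hC ha)

end OrthogonalSeries

section Laplace

variable {ι H : Type*} [NormedAddCommGroup H] [InnerProductSpace ℂ H] {s z : ℂ}

theorem norm_cexp_mul_ofReal (z : ℂ) (t : ℝ) :
    ‖Complex.exp (z * t)‖ = Real.exp (z.re * t) := by
  simp [Complex.norm_exp]

theorem norm_cexp_mul_ofReal_le_one (hz : z.re ≤ 0) {t : ℝ} (ht : 0 ≤ t) :
    ‖Complex.exp (z * t)‖ ≤ 1 := by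
  rw [norm_cexp_mul_ofReal, Real.exp_le_one_iff]
  exact mul_nonpos_of_nonpos_of_nonneg hz ht

theorem cexp_neg_mul_smul_cexp_mul_smul (s z : ℂ) (t : ℝ) (v : H) :
    Complex.exp (-s * t) • Complex.exp (z * t) • v = Complex.exp ((z - s) * t) • v := by
  rw [smul_smul, ← Complex.exp_add, sub_mul, neg_mul, neg_add_eq_sub]

theorem integrableOn_Ioi_cexp_neg_mul_smul_cexp_mul_smul (h : z.re < s.re) (v : H) :
    IntegrableOn (fun t : ℝ => Complex.exp (-s * t) • Complex.exp (z * t) • v) (Ioi 0) := by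
  simp_rw [cexp_neg_mul_smul_cexp_mul_smul]
  exact (integrableOn_exp_mul_complex_Ioi (by simpa using h) 0).smul_const v

theorem integral_Ioi_cexp_neg_mul_smul_cexp_mul_smul [CompleteSpace H] (h : z.re < s.re)
    (v : H) :
    ∫ t in Ioi (0 : ℝ), Complex.exp (-s * t) • Complex.exp (z * t) • v = (s - z)⁻¹ • v := by
  simp_rw [cexp_neg_mul_smul_cexp_mul_smul]
  rw [integral_smul_const, integral_exp_mul_complex_Ioi (by simpa using h), neg_div,
    ← div_neg, neg_sub]
  simp

variable {g : ι → H} {Λ : ι → ℂ}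

theorem norm_cexp_neg_mul_smul_sum_le (hg : Pairwise fun i j => ⟪g i, g j⟫_ℂ = 0)
    (hsum : Summable fun i => ‖g i‖ ^ 2) (hΛ : ∀ i, (Λ i).re ≤ 0) (A : Finset ι)
    {t : ℝ} (ht : 0 ≤ t) :
    ‖Complex.exp (-s * t) • ∑ i ∈ A, Complex.exp (Λ i * t) • g i‖ ≤
      √(∑' i, ‖g i‖ ^ 2) * Real.exp (-s.re * t) := by
  rw [norm_smul, norm_cexp_mul_ofReal, Complex.neg_re, mul_comm]
  gcongr
  simpa using norm_sum_smul_le_of_pairwise_inner_eq_zero hg hsum zero_le_one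
    (fun i => norm_cexp_mul_ofReal_le_one (hΛ i) ht) A

theorem tendsto_cexp_neg_mul_smul_sum [CompleteSpace H]
    (hg : Pairwise fun i j => ⟪g i, g j⟫_ℂ = 0) (hsum : Summable fun i => ‖g i‖ ^ 2)
    (hΛ : ∀ i, (Λ i).re ≤ 0) {t : ℝ} (ht : 0 ≤ t) :
    Tendsto (fun A : Finset ι => Complex.exp (-s * t) • ∑ i ∈ A, Complex.exp (Λ i * t) • g i)
      atTop (𝓝 (Complex.exp (-s * t) • ∑' i, Complex.exp (Λ i * t) • g i)) :=
  Tendsto.const_smul (summable_smul_of_pairwise_inner_eq_zero hg hsum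
    fun i => norm_cexp_mul_ofReal_le_one (hΛ i) ht).hasSum _

variable [Countable ι] [CompleteSpace H]

theorem aestronglyMeasurable_cexp_neg_mul_smul_tsum
    (hg : Pairwise fun i j => ⟪g i, g j⟫_ℂ = 0) (hsum : Summable fun i => ‖g i‖ ^ 2)
    (hΛ : ∀ i, (Λ i).re ≤ 0) :
    AEStronglyMeasurable
      (fun t : ℝ => Complex.exp (-s * t) • ∑' i, Complex.exp (Λ i * t) • g i)
      (volume.restrict (Ioi 0)) :=
  aestronglyMeasurable_of_tendsto_ae atTop
    (fun A => Continuous.aestronglyMeasurable (by fun_prop))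
    ((ae_restrict_mem measurableSet_Ioi).mono fun _ ht =>
      tendsto_cexp_neg_mul_smul_sum hg hsum hΛ (le_of_lt ht))

theorem integrableOn_Ioi_cexp_neg_mul_smul_tsum
    (hg : Pairwise fun i j => ⟪g i, g j⟫_ℂ = 0) (hsum : Summable fun i => ‖g i‖ ^ 2)
    (hΛ : ∀ i, (Λ i).re ≤ 0) (hs : 0 < s.re) :
    IntegrableOn (fun t : ℝ => Complex.exp (-s * t) • ∑' i, Complex.exp (Λ i * t) • g i)
      (Ioi 0) := by
  refine ((exp_neg_integrableOn_Ioi 0 hs).const_mul √(∑' i, ‖g i‖ ^ 2)).mono'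
    (aestronglyMeasurable_cexp_neg_mul_smul_tsum hg hsum hΛ) ?_
  filter_upwards [ae_restrict_mem measurableSet_Ioi] with t ht
  rw [norm_smul, norm_cexp_mul_ofReal, Complex.neg_re, mul_comm]
  gcongr
  simpa using norm_tsum_smul_le_of_pairwise_inner_eq_zero hg hsum zero_le_one
    fun i => norm_cexp_mul_ofReal_le_one (hΛ i) (le_of_lt ht)

theorem hasSum_integral_Ioi_cexp_neg_mul_smul_tsum
    (hg : Pairwise fun i j => ⟪g i, g j⟫_ℂ = 0) (hsum : Summable fun i => ‖g i‖ ^ 2)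
    (hΛ : ∀ i, (Λ i).re ≤ 0) (hs : 0 < s.re) :
    HasSum (fun i => (s - Λ i)⁻¹ • g i)
      (∫ t in Ioi (0 : ℝ), Complex.exp (-s * t) • ∑' i, Complex.exp (Λ i * t) • g i) := by
  have hΛs i : (Λ i).re < s.re := (hΛ i).trans_lt hs
  have hpartial (A : Finset ι) : ∫ t in Ioi (0 : ℝ),
      Complex.exp (-s * t) • ∑ i ∈ A, Complex.exp (Λ i * t) • g i =
        ∑ i ∈ A, (s - Λ i)⁻¹ • g i := by
    simp_rw [Finset.smul_sum]
    rw [integral_finsetSum _ fun i _ =>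
      integrableOn_Ioi_cexp_neg_mul_smul_cexp_mul_smul (hΛs i) _]
    exact Finset.sum_congr rfl fun i _ =>
      integral_Ioi_cexp_neg_mul_smul_cexp_mul_smul (hΛs i) _
  have hDCT : Tendsto (fun A : Finset ι => ∫ t in Ioi (0 : ℝ),
      Complex.exp (-s * t) • ∑ i ∈ A, Complex.exp (Λ i * t) • g i) atTop
      (𝓝 (∫ t in Ioi (0 : ℝ), Complex.exp (-s * t) • ∑' i, Complex.exp (Λ i * t) • g i)) :=
    tendsto_integral_filter_of_dominated_convergence _
      (Eventually.of_forall fun A => Continuous.aestronglyMeasurable (by fun_prop))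
      (Eventually.of_forall fun A => (ae_restrict_mem measurableSet_Ioi).mono fun _ ht =>
        norm_cexp_neg_mul_smul_sum_le hg hsum hΛ A (le_of_lt ht))
      ((exp_neg_integrableOn_Ioi 0 hs).const_mul _)
      ((ae_restrict_mem measurableSet_Ioi).mono fun _ ht =>
        tendsto_cexp_neg_mul_smul_sum hg hsum hΛ (le_of_lt ht))
  simp only [hpartial] at hDCT
  exact hDCT

end Laplace

def koopmanEigenvalue {p ℓ : ℕ} (ν : Fin p → ℂ) (Ω : Fin ℓ → ℝ)
    (q : (Fin p → ℕ) × (Fin ℓ → ℤ)) : ℂ :=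
  (∑ i, (q.1 i : ℂ) * ν i) + Complex.I * ∑ j, (q.2 j : ℂ) * (Ω j : ℂ)

theorem re_koopmanEigenvalue {p ℓ : ℕ} (ν : Fin p → ℂ) (Ω : Fin ℓ → ℝ)
    (q : (Fin p → ℕ) × (Fin ℓ → ℤ)) :
    (koopmanEigenvalue ν Ω q).re = ∑ i, (q.1 i : ℝ) * (ν i).re := by
  simp [koopmanEigenvalue, Complex.re_sum, Complex.im_sum]

theorem re_koopmanEigenvalue_nonpos {p ℓ : ℕ} {ν : Fin p → ℂ} (hν : ∀ i, (ν i).re ≤ 0)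
    (Ω : Fin ℓ → ℝ) (q : (Fin p → ℕ) × (Fin ℓ → ℤ)) : (koopmanEigenvalue ν Ω q).re ≤ 0 := by
  rw [re_koopmanEigenvalue]
  exact Finset.sum_nonpos fun i _ => mul_nonpos_of_nonneg_of_nonpos (Nat.cast_nonneg _) (hν i)

/-- Spectral expansion of the Koopman resolvent for dynamics converging to a
stable quasi-periodic torus with basic frequencies `Ω 0, …, Ω (ℓ-1)` and
quasi-characteristic exponents `ν 0, …, ν (p-1)` (with negative real parts);
`g (k, m)` are the orthogonal spectral projections of the observable, indexed
by multi-indices `k : Fin p → ℕ` and `m : Fin ℓ → ℤ`. -/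
theorem koopman_resolvent_stable_quasi_periodic_torus
    {H : Type*} [NormedAddCommGroup H] [InnerProductSpace ℂ H] [CompleteSpace H]
    (p ℓ : ℕ) (ν : Fin p → ℂ) (hν : ∀ i, (ν i).re < 0) (Ω : Fin ℓ → ℝ)
    (g : (Fin p → ℕ) × (Fin ℓ → ℤ) → H)
    (horth : Pairwise fun q r => ⟪g q, g r⟫_ℂ = 0)
    (hsum : Summable fun q => ‖g q‖ ^ 2) :
    (∀ t : ℝ, 0 ≤ t →
      Summable fun q : (Fin p → ℕ) × (Fin ℓ → ℤ) =>
        Complex.exp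
          (((∑ i, (q.1 i : ℂ) * ν i) + Complex.I * ∑ j, (q.2 j : ℂ) * (Ω j : ℂ)) * t)
          • g q) ∧
    ∀ s : ℂ, 0 < s.re →
      IntegrableOn
        (fun t : ℝ =>
          Complex.exp (-s * t) •
            ∑' q : (Fin p → ℕ) × (Fin ℓ → ℤ),
              Complex.exp
                (((∑ i, (q.1 i : ℂ) * ν i) +
                    Complex.I * ∑ j, (q.2 j : ℂ) * (Ω j : ℂ)) * t) • g q)
        (Set.Ioi 0) ∧
      (Summable fun q : (Fin p → ℕ) × (Fin ℓ → ℤ) =>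
        (s - ((∑ i, (q.1 i : ℂ) * ν i) +
            Complex.I * ∑ j, (q.2 j : ℂ) * (Ω j : ℂ)))⁻¹ • g q) ∧
      ∫ t in Set.Ioi (0 : ℝ),
          Complex.exp (-s * t) •
            ∑' q : (Fin p → ℕ) × (Fin ℓ → ℤ),
              Complex.exp
                (((∑ i, (q.1 i : ℂ) * ν i) +
                    Complex.I * ∑ j, (q.2 j : ℂ) * (Ω j : ℂ)) * t) • g q
        = ∑' q : (Fin p → ℕ) × (Fin ℓ → ℤ),
            (s - ((∑ i, (q.1 i : ℂ) * ν i) +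
                Complex.I * ∑ j, (q.2 j : ℂ) * (Ω j : ℂ)))⁻¹ • g q := by
  have hΛ := re_koopmanEigenvalue_nonpos (fun i => (hν i).le) Ω
  refine ⟨fun t ht => summable_smul_of_pairwise_inner_eq_zero horth hsum
    fun q => norm_cexp_mul_ofReal_le_one (hΛ q) ht, fun s hs => ?_⟩
  have hresolvent := hasSum_integral_Ioi_cexp_neg_mul_smul_tsum horth hsum hΛ hs
  exact ⟨integrableOn_Ioi_cexp_neg_mul_smul_tsum horth hsum hΛ hs, hresolvent.summable,
    hresolvent.tsum_eq.symm⟩
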